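/- arXiv:2502.09259 — 7 statements merged into one kernel-verified Lean document; each statement's English description precedes it below -/
import Mathlib

section
/- Define a sequence (t_n) of rationals by t_0 = 0, t_1 = 1, and t_{n+1} = (1/(n+1)) Σ_{j=0}^{n} t_j t_{n-j} for n ≥ 1. Then for all n ≥ 0, (n!)^2 · t_n is an integer. -/
/-!
Rescaling by `a n = (n !) ^ 2 * t n` clears every denominator of the recurrence: since
`(n + 1)! ^ 2 / (n + 1) = (n + 1) * n ! ^ 2` and `n ! ^ 2 = (n.choose j) ^ 2 * j ! ^ 2 * (n - j)! ^ 2`,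
it becomes `a (n + 1) = (n + 1) * ∑ j ≤ n, (n.choose j) ^ 2 * a j * a (n - j)`, whose coefficients are
integers. Integrality of `a n` then follows by strong induction.
-/

open Finset Nat

theorem factorial_sq_mul_mul_eq {R : Type*} [CommRing R] (f : ℕ → R) {n j : ℕ} (hj : j ≤ n) :
    (n ! : R) ^ 2 * (f j * f (n - j)) =
      (n.choose j : R) ^ 2 * ((j ! : R) ^ 2 * f j) * (((n - j)! : R) ^ 2 * f (n - j)) := by
  rw [← choose_mul_factorial_mul_factorial hj]
  push_cast
  ring

theorem factorial_sq_mul_succ_eq_of_convolution {K : Type*} [Field K] [CharZero K] (t : ℕ → K)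
    {n : ℕ} (h : t (n + 1) = (1 / (n + 1 : K)) * ∑ j ∈ range (n + 1), t j * t (n - j)) :
    ((n + 1)! : K) ^ 2 * t (n + 1) = (n + 1) * ∑ j ∈ range (n + 1),
      (n.choose j : K) ^ 2 * ((j ! : K) ^ 2 * t j) * (((n - j)! : K) ^ 2 * t (n - j)) := by
  have hsum : (n ! : K) ^ 2 * ∑ j ∈ range (n + 1), t j * t (n - j) = ∑ j ∈ range (n + 1),
      (n.choose j : K) ^ 2 * ((j ! : K) ^ 2 * t j) * (((n - j)! : K) ^ 2 * t (n - j)) := by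
    rw [mul_sum]
    exact sum_congr rfl fun j hj => factorial_sq_mul_mul_eq t (mem_range_succ_iff.mp hj)
  rw [← hsum, h, factorial_succ]
  push_cast
  field_simp

theorem tangent_coeff_denominator (t : ℕ → ℚ) (h0 : t 0 = 0) (h1 : t 1 = 1)
    (hrec : ∀ n : ℕ, 1 ≤ n →
      t (n + 1) = (1 / (n + 1 : ℚ)) * ∑ j ∈ Finset.range (n + 1), t j * t (n - j)) :
    ∀ n : ℕ, ∃ z : ℤ, ((Nat.factorial n : ℚ)) ^ 2 * t n = z := by
  suffices h : ∀ n, (n ! : ℚ) ^ 2 * t n ∈ (Int.castRingHom ℚ).range by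
    intro n
    obtain ⟨z, hz⟩ := h n
    exact ⟨z, hz.symm⟩
  intro n
  induction n using Nat.strong_induction_on with
  | _ n ih =>
    rcases n with _ | _ | n
    · simp [h0]
    · simp [h1]
    · rw [factorial_sq_mul_succ_eq_of_convolution t (hrec (n + 1) (by omega))]
      refine mul_mem (add_mem (natCast_mem _ _) (one_mem _)) (sum_mem fun j hj => ?_)
      have hj : j ≤ n + 1 := mem_range_succ_iff.mp hj
      exact mul_mem (mul_mem (pow_mem (natCast_mem _ _) 2) (ih j (by omega))) (ih _ (by omega))
end

section
/- Define a sequence (b_n) of rationals by b_0 = 1 and b_{n+1} = -(1/(n+2)) ( b_n + Σ_{j=1}^{n} b_j b_{n+1-j} ) for n ≥ 0. Then for all n ≥ 1, 24^n · (n-1)! · (n+1)! · b_n is an integer. -/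
/-! With `a n = 24 ^ n * (n - 1)! * (n + 1)! * b n`, the recurrence becomes
`a (m + 1) = -(24 m a m + ∑_{j + k = m + 1} C(m + 1, j - 1) C(m + 1, j + 1) / (m + 1) · a j a k)`.
The terms `j` and `k = m + 1 - j` have equal coefficients, and twice that coefficient is an
integer because `(m + 3) C(m + 1, i) C(m + 1, i + 2)` is a multiple of `m + 1`. The middle term
`j = k` is integral for even `j`, where `2 j` is coprime to `j - 1`, and vanishes for odd `j ≥ 3`
since `b j = 0` there. -/

open Finset Nat

theorem Nat.Coprime.dvd_choose {m k : ℕ} (h : m.Coprime k) : m ∣ m.choose k := by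
  rcases m with _ | n
  · obtain rfl : k = 1 := Nat.coprime_zero_left k |>.mp h
    simp
  rcases k with _ | k
  · simp_all
  exact h.dvd_of_dvd_mul_right ⟨n.choose k, (add_one_mul_choose_eq n k).symm⟩

theorem Nat.dvd_two_mul_choose_mul_choose (n i : ℕ) :
    n + 1 ∣ 2 * ((n + 1).choose i * (n + 1).choose (i + 2)) := by
  rcases lt_or_ge (n + 1) i with hi | hi
  · simp [choose_eq_zero_of_lt hi]
  have hlow := choose_mul_succ_eq n i
  have hhigh := add_one_mul_choose_eq n (i + 1)
  have key : (n + 3) * ((n + 1).choose i * (n + 1).choose (i + 2)) =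
      (n + 1) * (n.choose i * (n + 1).choose (i + 2) + (n + 1).choose i * n.choose (i + 1)) := by
    have hsplit : n + 3 = (n + 1 - i) + (i + 2) := by omega
    rw [hsplit]
    linear_combination (n + 1).choose (i + 2) * hlow.symm + (n + 1).choose i * hhigh.symm
  have hdvd : n + 1 ∣ (n + 1) * ((n + 1).choose i * (n + 1).choose (i + 2)) +
      2 * ((n + 1).choose i * (n + 1).choose (i + 2)) := ⟨_, by rw [← key]; ring⟩
  exact (Nat.dvd_add_right (dvd_mul_right _ _)).mp hdvd

theorem Nat.two_mul_dvd_choose_sub_one_of_even {j : ℕ} (hj : Even j) (hj0 : j ≠ 0) :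
    2 * j ∣ (2 * j).choose (j - 1) := by
  obtain ⟨i, rfl⟩ : ∃ i, j = i + 1 := ⟨j - 1, by omega⟩
  have hodd : Odd i := by simpa [parity_simps] using hj
  exact Coprime.dvd_choose <|
    (coprime_two_left.mpr hodd).mul_left (coprime_self_add_left.mpr (coprime_one_left i))

theorem Finset.sum_eq_sum_pairs_add_sum_middle {M : Type*} [AddCommMonoid M] (s : Finset ℕ)
    (m : ℕ) (f : ℕ → M) (hs : ∀ j ∈ s, j ≤ m ∧ m - j ∈ s) :
    ∑ j ∈ s, f j = ∑ j ∈ s with 2 * j < m, (f j + f (m - j)) + ∑ j ∈ s with 2 * j = m, f j := by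
  have hreflect : ∑ j ∈ s with m < 2 * j, f j = ∑ j ∈ s with 2 * j < m, f (m - j) := by
    refine sum_nbij' (m - ·) (m - ·) ?_ ?_ ?_ ?_ ?_ <;> intro j hj <;>
      simp only [mem_filter] at hj ⊢ <;>
      have := hs j hj.1
    · exact ⟨this.2, by omega⟩
    · exact ⟨this.2, by omega⟩
    · omega
    · omega
    · rw [Nat.sub_sub_self this.1]
  rw [sum_add_distrib, ← hreflect, ← sum_filter_add_sum_filter_not s (2 * · < m),
    ← sum_filter_add_sum_filter_not (s.filter (¬ 2 * · < m)) (2 * · = m)]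
  have hmid : s.filter (fun j => ¬ 2 * j < m ∧ 2 * j = m) = s.filter (2 * · = m) :=
    filter_congr fun _ _ => by omega
  have hhigh : s.filter (fun j => ¬ 2 * j < m ∧ ¬ 2 * j = m) = s.filter (m < 2 * ·) :=
    filter_congr fun _ _ => by omega
  simp only [filter_filter, hmid, hhigh]
  abel

theorem Subring.natCast_div_mem_bot {K : Type*} [Field K] {N d : ℕ} (h : d ∣ N) :
    (N : K) / d ∈ (⊥ : Subring K) := by
  obtain ⟨c, rfl⟩ := h
  rcases eq_or_ne (d : K) 0 with hd | hd
  · simp [hd]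
  · rw [Nat.cast_mul, mul_div_cancel_left₀ _ hd]
    exact natCast_mem _ c

def BernoulliRecurrence (b : ℕ → ℚ) : Prop :=
  ∀ n : ℕ, b (n + 1) = -(1 / (n + 2 : ℚ)) * (b n + ∑ j ∈ Icc 1 n, b j * b (n + 1 - j))

def scaledCoeff (b : ℕ → ℚ) (n : ℕ) : ℚ := 24 ^ n * ((n - 1)! : ℚ) * ((n + 1)! : ℚ) * b n

theorem scaledCoeff_mul_scaledCoeff (b : ℕ → ℚ) {j k : ℕ} (hj : 1 ≤ j) (hk : 1 ≤ k) :
    ((j + k).choose (j - 1) * (j + k).choose (j + 1) : ℚ) / (j + k : ℕ) *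
      (scaledCoeff b j * scaledCoeff b k) =
    24 ^ (j + k) * ((j + k - 1)! : ℚ) * ((j + k)! : ℚ) * (b j * b k) := by
  obtain ⟨i, rfl⟩ : ∃ i, j = i + 1 := ⟨j - 1, by omega⟩
  obtain ⟨l, rfl⟩ : ∃ l, k = l + 1 := ⟨k - 1, by omega⟩
  have hleft : ((i + l + 2).choose i * (l + 2)! * i ! : ℚ) = (i + l + 2)! := by
    rw [show i + l + 2 = l + 2 + i by ring]
    exact_mod_cast add_choose_mul_factorial_mul_factorial (l + 2) i
  have hright : ((i + l + 2).choose (i + 2) * l ! * (i + 2)! : ℚ) = (i + l + 2)! := by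
    rw [show i + l + 2 = l + (i + 2) by ring]
    exact_mod_cast add_choose_mul_factorial_mul_factorial l (i + 2)
  have hsucc : ((i + l + 2)! : ℚ) = (i + l + 2) * (i + l + 1)! := by
    exact_mod_cast factorial_succ (i + l + 1)
  simp only [scaledCoeff, show i + 1 + (l + 1) = i + l + 2 by ring, Nat.add_sub_cancel,
    show i + l + 2 - 1 = i + l + 1 by omega, show ∀ n, n + 1 + 1 = n + 2 from fun _ => rfl]
  push_cast
  field_simp
  linear_combination 24 ^ (i + l + 2) * b (i + 1) * b (l + 1) *
    (((i + l + 2).choose (i + 2) * l ! * (i + 2)! : ℚ) * hleft + ((i + l + 2)! : ℚ) * hright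
      + ((i + l + 2)! : ℚ) * hsucc)

namespace BernoulliRecurrence

variable {b : ℕ → ℚ}

theorem b_one (hrec : BernoulliRecurrence b) (h0 : b 0 = 1) : b 1 = -1 / 2 := by
  rw [hrec 0, h0]
  norm_num

theorem b_two (hrec : BernoulliRecurrence b) (h0 : b 0 = 1) : b 2 = 1 / 12 := by
  rw [hrec 1]
  norm_num [b_one hrec h0]

theorem b_odd (hrec : BernoulliRecurrence b) (h0 : b 0 = 1) {k : ℕ} (hk : 1 ≤ k) :
    b (2 * k + 1) = 0 := by
  induction k using Nat.strong_induction_on with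
  | _ k ih =>
  have hvanish : ∀ j ∈ Icc 1 (2 * k), j ≠ 1 ∧ j ≠ 2 * k → b j * b (2 * k + 1 - j) = 0 := by
    intro j hj hne
    rw [mem_Icc] at hj
    obtain ⟨r, rfl | rfl⟩ := j.even_or_odd'
    · rw [show 2 * k + 1 - 2 * r = 2 * (k - r) + 1 by omega, ih (k - r) (by omega) (by omega),
        mul_zero]
    · rw [ih r (by omega) (by omega), zero_mul]
  rw [hrec (2 * k), sum_eq_add 1 (2 * k) (by omega) hvanish
    (fun h => (h (mem_Icc.mpr ⟨le_rfl, by omega⟩)).elim)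
    (fun h => (h (mem_Icc.mpr ⟨by omega, le_rfl⟩)).elim),
    show 2 * k + 1 - 1 = 2 * k by omega, show 2 * k + 1 - 2 * k = 1 by omega, b_one hrec h0]
  ring

theorem scaledCoeff_succ (hrec : BernoulliRecurrence b) {m : ℕ} (hm : 1 ≤ m) :
    scaledCoeff b (m + 1) = -(24 * m * scaledCoeff b m + ∑ j ∈ Icc 1 m,
      ((m + 1).choose (j - 1) * (m + 1).choose (j + 1) : ℚ) / (m + 1) *
        (scaledCoeff b j * scaledCoeff b (m + 1 - j))) := by
  have hterm : ∀ j ∈ Icc 1 m,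
      ((m + 1).choose (j - 1) * (m + 1).choose (j + 1) : ℚ) / (m + 1) *
        (scaledCoeff b j * scaledCoeff b (m + 1 - j)) =
      24 ^ (m + 1) * (m ! : ℚ) * ((m + 1)! : ℚ) * (b j * b (m + 1 - j)) := by
    intro j hj
    rw [mem_Icc] at hj
    have h := scaledCoeff_mul_scaledCoeff b (j := j) (k := m + 1 - j) (by omega) (by omega)
    rw [Nat.add_sub_cancel' (by omega : j ≤ m + 1), Nat.add_sub_cancel] at h
    exact_mod_cast h
  have hfirst : 24 ^ (m + 1) * (m ! : ℚ) * ((m + 1)! : ℚ) * b m = 24 * m * scaledCoeff b m := by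
    obtain ⟨n, rfl⟩ : ∃ n, m = n + 1 := ⟨m - 1, by omega⟩
    simp only [scaledCoeff, factorial_succ n, Nat.add_sub_cancel]
    push_cast
    ring
  rw [sum_congr rfl hterm, ← mul_sum, ← hfirst, scaledCoeff, hrec m, Nat.add_sub_cancel,
    factorial_succ (m + 1)]
  push_cast
  field_simp
  ring

theorem scaledCoeff_succ_mem_bot (hrec : BernoulliRecurrence b) (h0 : b 0 = 1) {m : ℕ}
    (hm : 2 ≤ m) (ih : ∀ j, 1 ≤ j → j ≤ m → scaledCoeff b j ∈ (⊥ : Subring ℚ)) :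
    scaledCoeff b (m + 1) ∈ (⊥ : Subring ℚ) := by
  rw [scaledCoeff_succ hrec (by omega), sum_eq_sum_pairs_add_sum_middle _ (m + 1) _
    (fun j hj => by simp only [mem_Icc] at hj ⊢; omega)]
  refine neg_mem (add_mem
    (mul_mem (by exact_mod_cast natCast_mem (⊥ : Subring ℚ) (24 * m)) (ih m (by omega) le_rfl))
    (add_mem (Subring.sum_mem _ fun j hj => ?pair) (Subring.sum_mem _ fun j hj => ?middle)))
  case pair =>
    simp only [mem_filter, mem_Icc] at hj
    have hdvd : m + 1 ∣ 2 * ((m + 1).choose (j - 1) * (m + 1).choose (j + 1)) := by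
      have h := dvd_two_mul_choose_mul_choose m (j - 1)
      rwa [show j - 1 + 2 = j + 1 by omega] at h
    rw [choose_symm_of_eq_add (show m + 1 = (m + 1 - j - 1) + (j + 1) by omega),
      choose_symm_of_eq_add (show m + 1 = (m + 1 - j + 1) + (j - 1) by omega),
      Nat.sub_sub_self (by omega : j ≤ m + 1)]
    convert mul_mem (Subring.natCast_div_mem_bot hdvd)
      (mul_mem (ih j (by omega) (by omega)) (ih (m + 1 - j) (by omega) (by omega))) using 1
    push_cast
    ring
  case middle =>
    simp only [mem_filter, mem_Icc] at hj
    obtain ⟨r, rfl | rfl⟩ := j.even_or_odd'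
    · have hdvd : m + 1 ∣ (m + 1).choose (2 * r - 1) * (m + 1).choose (2 * r + 1) := by
        rw [← hj.2]
        exact (two_mul_dvd_choose_sub_one_of_even (even_two_mul r) (by omega)).mul_right _
      convert mul_mem (Subring.natCast_div_mem_bot hdvd)
        (mul_mem (ih (2 * r) (by omega) (by omega)) (ih (m + 1 - 2 * r) (by omega) (by omega)))
        using 1
      push_cast
      ring
    · simp [scaledCoeff, b_odd hrec h0 (show 1 ≤ r by omega)]

end BernoulliRecurrence

theorem bernoulli_coeff_denominator (b : ℕ → ℚ) (h0 : b 0 = 1)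
    (hrec : ∀ n : ℕ, b (n + 1) =
      -(1 / (n + 2 : ℚ)) * (b n + ∑ j ∈ Finset.Icc 1 n, b j * b (n + 1 - j))) :
    ∀ n : ℕ, 1 ≤ n → ∃ z : ℤ,
      (24 : ℚ) ^ n * (Nat.factorial (n - 1) : ℚ) * (Nat.factorial (n + 1) : ℚ) * b n = z := by
  have hrec : BernoulliRecurrence b := hrec
  intro n hn
  suffices scaledCoeff b n ∈ (⊥ : Subring ℚ) by
    obtain ⟨z, hz⟩ := Subring.mem_bot.mp this
    exact ⟨z, hz.symm⟩
  induction n using Nat.strong_induction_on with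
  | _ n ih =>
  match n, hn with
  | 1, _ => exact Subring.mem_bot.mpr ⟨-24, by norm_num [scaledCoeff, hrec.b_one h0]⟩
  | 2, _ => exact Subring.mem_bot.mpr ⟨288, by norm_num [scaledCoeff, hrec.b_two h0]⟩
  | m + 3, _ =>
    exact hrec.scaledCoeff_succ_mem_bot h0 (by omega) fun j hj _ => ih j (by omega) hj
end

section
/- Let g₂, g₃ be rational numbers and define a sequence (p_n)_{n≥2} by p_2 = g₂/20, p_3 = g₃/28, and p_n = (3/((2n+1)(n-3))) Σ_{j=2}^{n-2} p_j p_{n-j} for n ≥ 4. If D is a positive integer such that D·g₂/20 and D·g₃/28 are integers, and Π = 2520, then for all n ≥ 1, D^{n+1} · Π^n · (n-1)! · n! · (2n)! · (2n+5)! · p_{n+2} is an integer. -/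
/-!
Normalise `p (n + 2)` by `w n = D ^ (n + 1) * 2520 ^ n * (n - 1)! * n! * (2n)! * (2n + 5)!`
(with `(0 - 1)! = 1`). For `n = m + 2` the denominator `(2m + 9)(m + 1)` of the recurrence
cancels against `(2n + 5)!` and `(n - 1)!`, and what is left is a multiple of `w a * w b` for every
`a + b = m`; by strong induction every `w n * p (n + 2)` is then an integer. That divisibility
comes from `i! j! ∣ (i + j)!` alone: for indices `a + 1`, `b + 1` pair the factorials as
`(2a + 2)! (2b + 7)!`, `(2a + 7)! (2b + 1)!`, `a! (b + 1)!`, `(a + 1)! (b + 1)!`; the stray factor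
`2`, or `5! = 120` when an index is `0`, is absorbed by the surplus `2520 ^ 2`.
-/
open Nat Finset

def weightFactorial (n : ℕ) : ℕ := (n - 1)! * n ! * (2 * n)! * (2 * n + 5)!

def convolutionFactorial (m : ℕ) : ℕ := m ! * (m + 2)! * (2 * m + 4)! * (2 * m + 8)!

lemma weightFactorial_add_two (m : ℕ) :
    weightFactorial (m + 2) = (m + 1) * (2 * m + 9) * convolutionFactorial m := by
  simp only [weightFactorial, convolutionFactorial, show m + 2 - 1 = m + 1 by omega,
    show 2 * (m + 2) = 2 * m + 4 by ring, show 2 * m + 4 + 5 = (2 * m + 8) + 1 by ring,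
    factorial_succ]
  ring

lemma weightFactorial_dvd_convolutionFactorial (n : ℕ) :
    weightFactorial n ∣ convolutionFactorial n := by
  unfold weightFactorial convolutionFactorial
  gcongr <;> omega

lemma weightFactorial_succ_mul_dvd (a b : ℕ) :
    weightFactorial (a + 1) * weightFactorial (b + 1) ∣ 2 * convolutionFactorial (a + b + 2) := by
  simp only [weightFactorial, convolutionFactorial, add_tsub_cancel_right]
  have h₁ : (2 * (a + 1))! * (2 * (b + 1) + 5)! ∣ (2 * (a + b + 2) + 8)! :=
    (factorial_mul_factorial_dvd_factorial_add _ _).trans (factorial_dvd_factorial (by omega))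
  have h₂ : (2 * (a + 1) + 5)! * (2 * b + 1)! ∣ (2 * (a + b + 2) + 4)! :=
    (factorial_mul_factorial_dvd_factorial_add _ _).trans (factorial_dvd_factorial (by omega))
  have h₃ : a ! * (b + 1)! ∣ (a + b + 2)! :=
    (factorial_mul_factorial_dvd_factorial_add _ _).trans (factorial_dvd_factorial (by omega))
  have h₄ : (a + 1)! * (b + 1)! ∣ (a + b + 2 + 2)! :=
    (factorial_mul_factorial_dvd_factorial_add _ _).trans (factorial_dvd_factorial (by omega))
  have h₅ : (2 * (b + 1))! = 2 * (b + 1) * (2 * b + 1)! := by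
    rw [show 2 * (b + 1) = (2 * b + 1) + 1 by ring, factorial_succ]
  calc _ = 2 * ((a ! * (b + 1)!) * ((a + 1)! * (b + 1)!) *
          ((2 * (a + 1) + 5)! * (2 * b + 1)!) * ((2 * (a + 1))! * (2 * (b + 1) + 5)!)) := by
        simp only [h₅, factorial_succ b]; ring
    _ ∣ _ := mul_dvd_mul_left 2 (mul_dvd_mul (mul_dvd_mul (mul_dvd_mul h₃ h₄) h₂) h₁)

lemma weightFactorial_mul_dvd (a b : ℕ) :
    weightFactorial a * weightFactorial b ∣ 2520 ^ 2 * convolutionFactorial (a + b) := by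
  have hzero (n : ℕ) : 120 * weightFactorial n ∣ 2520 ^ 2 * convolutionFactorial n :=
    mul_dvd_mul (by norm_num) (weightFactorial_dvd_convolutionFactorial n)
  have h₀ : weightFactorial 0 = 120 := rfl
  match a, b with
  | 0, b => simpa [h₀] using hzero b
  | a + 1, 0 => simpa [h₀, mul_comm] using hzero (a + 1)
  | a + 1, b + 1 =>
    rw [show a + 1 + (b + 1) = a + b + 2 by ring]
    exact (weightFactorial_succ_mul_dvd a b).trans (mul_dvd_mul_right (by norm_num) _)

def coeffWeight (D n : ℕ) : ℕ := D ^ (n + 1) * 2520 ^ n * weightFactorial n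

lemma coeffWeight_mul_dvd (D a b : ℕ) :
    coeffWeight D a * coeffWeight D b ∣
      3 * D ^ (a + b + 3) * 2520 ^ (a + b + 2) * convolutionFactorial (a + b) := by
  obtain ⟨k, hk⟩ := weightFactorial_mul_dvd a b
  refine ⟨3 * D * k, ?_⟩
  calc 3 * D ^ (a + b + 3) * 2520 ^ (a + b + 2) * convolutionFactorial (a + b)
      = 3 * D ^ (a + b + 3) * 2520 ^ (a + b) * (2520 ^ 2 * convolutionFactorial (a + b)) := by
        ring
    _ = _ := by rw [hk, coeffWeight, coeffWeight]; ring

lemma coeffWeight_add_two_mul (D m : ℕ) :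
    (coeffWeight D (m + 2) : ℚ) * (3 / ((2 * m + 9) * (m + 1))) =
      (3 * D ^ (m + 3) * 2520 ^ (m + 2) * convolutionFactorial m : ℕ) := by
  rw [coeffWeight, weightFactorial_add_two]
  push_cast
  field_simp

lemma sum_Icc_eq_sum_antidiagonal {M : Type*} [AddCommMonoid M] (f : ℕ → ℕ → M) (m : ℕ) :
    ∑ j ∈ Icc 2 (m + 2), f j (m + 4 - j) = ∑ x ∈ antidiagonal m, f (x.1 + 2) (x.2 + 2) := by
  rw [Nat.sum_antidiagonal_eq_sum_range_succ (fun i j => f (i + 2) (j + 2)),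
    ← Ico_add_one_right_eq_Icc, sum_Ico_eq_sum_range]
  refine sum_congr rfl fun k hk => ?_
  rw [mem_range] at hk
  rw [add_comm 2 k, show m + 4 - (k + 2) = m - k + 2 by omega]

section

variable {g2 g3 : ℚ} {p : ℕ → ℚ} (h2 : p 2 = g2 / 20) (h3 : p 3 = g3 / 28)
    (hrec : ∀ n : ℕ, 4 ≤ n →
      p n = 3 / ((2 * n + 1) * (n - 3)) * ∑ j ∈ Icc 2 (n - 2), p j * p (n - j))
    {D : ℕ} (hD2 : ∃ z : ℤ, (D : ℚ) * g2 / 20 = z)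
    (hD3 : ∃ z : ℤ, (D : ℚ) * g3 / 28 = z)

include hrec in
lemma add_four_eq_sum_antidiagonal (m : ℕ) :
    p (m + 4) =
      3 / ((2 * m + 9) * (m + 1)) * ∑ x ∈ antidiagonal m, p (x.1 + 2) * p (x.2 + 2) := by
  rw [hrec (m + 4) (by omega), show m + 4 - 2 = m + 2 by omega,
    sum_Icc_eq_sum_antidiagonal (fun i j => p i * p j)]
  push_cast
  ring_nf

include h2 h3 hrec hD2 hD3 in
theorem coeffWeight_mul_mem_bot (n : ℕ) :
    (coeffWeight D n : ℚ) * p (n + 2) ∈ (⊥ : Subring ℚ) := by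
  induction n using Nat.strong_induction_on with
  | _ n ih =>
  rcases n with _ | _ | m
  · obtain ⟨z, hz⟩ := hD2
    have hw : coeffWeight D 0 = 120 * D := by
      norm_num [coeffWeight, weightFactorial, factorial, mul_comm]
    refine Subring.mem_bot.2 ⟨120 * z, ?_⟩
    rw [hw, h2]
    push_cast
    linear_combination (-120 : ℚ) * hz
  · obtain ⟨z, hz⟩ := hD3
    have hw : coeffWeight D 1 = D ^ 2 * 2520 * 10080 := by
      simp [coeffWeight, weightFactorial, factorial]
    refine Subring.mem_bot.2 ⟨25401600 * D * z, ?_⟩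
    rw [hw, h3]
    push_cast
    linear_combination (-25401600 * (D : ℚ)) * hz
  · rw [add_four_eq_sum_antidiagonal hrec, ← mul_assoc, coeffWeight_add_two_mul, mul_sum]
    refine Subring.sum_mem _ fun x hx => ?_
    rw [HasAntidiagonal.mem_antidiagonal] at hx
    obtain ⟨k, hk⟩ := coeffWeight_mul_dvd D x.1 x.2
    rw [← hx, hk]
    convert mul_mem (mul_mem (natCast_mem _ k) (ih x.1 (by omega))) (ih x.2 (by omega)) using 1
    push_cast
    ring

end

theorem weierstrass_coeff_denominator_general (g2 g3 : ℚ) (p : ℕ → ℚ)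
    (h2 : p 2 = g2 / 20) (h3 : p 3 = g3 / 28)
    (hrec : ∀ n : ℕ, 4 ≤ n →
      p n = (3 / (((2 * n + 1 : ℚ)) * ((n : ℚ) - 3))) *
        ∑ j ∈ Finset.Icc 2 (n - 2), p j * p (n - j))
    (D : ℕ)
    (hD2 : ∃ z : ℤ, (D : ℚ) * g2 / 20 = z) (hD3 : ∃ z : ℤ, (D : ℚ) * g3 / 28 = z) :
    ∀ n : ℕ, 1 ≤ n → ∃ z : ℤ,
      (D : ℚ) ^ (n + 1) * (2520 : ℚ) ^ n * (Nat.factorial (n - 1) : ℚ) *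
        (Nat.factorial n : ℚ) * (Nat.factorial (2 * n) : ℚ) *
        (Nat.factorial (2 * n + 5) : ℚ) * p (n + 2) = z := by
  intro n _
  obtain ⟨z, hz⟩ := Subring.mem_bot.1 (coeffWeight_mul_mem_bot h2 h3 hrec hD2 hD3 n)
  refine ⟨z, ?_⟩
  rw [hz, coeffWeight, weightFactorial]
  push_cast
  ring

theorem weierstrass_coeff_denominator (g2 g3 : ℚ) (p : ℕ → ℚ)
    (h2 : p 2 = g2 / 20) (h3 : p 3 = g3 / 28)
    (hrec : ∀ n : ℕ, 4 ≤ n →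
      p n = (3 / (((2 * n + 1 : ℚ)) * ((n : ℚ) - 3))) *
        ∑ j ∈ Finset.Icc 2 (n - 2), p j * p (n - j))
    (D : ℕ) (hD : 0 < D)
    (hD2 : ∃ z : ℤ, (D : ℚ) * g2 / 20 = z) (hD3 : ∃ z : ℤ, (D : ℚ) * g3 / 28 = z) :
    ∀ n : ℕ, 1 ≤ n → ∃ z : ℤ,
      (D : ℚ) ^ (n + 1) * (2520 : ℚ) ^ n * (Nat.factorial (n - 1) : ℚ) *
        (Nat.factorial n : ℚ) * (Nat.factorial (2 * n) : ℚ) *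
        (Nat.factorial (2 * n + 5) : ℚ) * p (n + 2) = z :=
  weierstrass_coeff_denominator_general g2 g3 p h2 h3 hrec D hD2 hD3
end

section
/- Let α, β, γ, δ be rationals and u₀, u₁ rationals; set u₂ = -δ u₀³ - 3γ u₀² - β u₀/2 - α/2 and for n ≥ 2 define u_{n+1} = (1/(n(n+1))) ( 2δ Σ_{j₁+j₂+j₃=n-1, 0≤j_i≤n-1} u_{j₁} u_{j₂} u_{j₃} + 6γ Σ_{j₁+j₂=n-1, 0≤j_i≤n-1} u_{j₁} u_{j₂} - 2β u_{n-1} - 2δ u_{n-2} ). Let C be a common denominator of 2δ, 6γ, 2β and D a common denominator of u₀, u₁, u₂. Then for all n ≥ 2, C^n · D^{2n+1} · (n-1)! · (n!)³ · u_n is an integer. -/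
/-!
Write `N n = Cⁿ D^(2n+1) (n-1)! (n!)³` (`coeffScale C D n`). The recursion divides by `n(n+1)`, and
`N (n+1) = n (n+1)³ C D² N n`, so `N (n+1) u_{n+1}` is `(n+1)²` times a combination, with the
coefficients `C·2δ, C·6γ, C·2β`, of `D² N n` times products of `u_j` with `∑ j ≤ n - 1`. Since
`N i · N j ∣ D · N (i+j)` and `N` is monotone for divisibility, each such product is an integer
multiple of a product of the `N j u_j`, and strong induction on `n` closes the argument.
-/

open Finset Nat

theorem Nat.factorial_pred_mul_factorial_pred_dvd (i j : ℕ) : (i - 1)! * (j - 1)! ∣ (i + j - 1)! :=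
  (factorial_mul_factorial_dvd_factorial_add _ _).trans (factorial_dvd_factorial (by omega))

theorem Subring.natCast_mul_mem_of_dvd {R : Type*} [CommRing R] (S : Subring R) {a b : ℕ} {x : R}
    (hab : a ∣ b) (hx : (a : R) * x ∈ S) : (b : R) * x ∈ S := by
  obtain ⟨m, rfl⟩ := hab
  simpa [mul_comm, mul_left_comm, mul_assoc] using S.mul_mem (natCast_mem S m) hx

def coeffScale (C D n : ℕ) : ℕ := C ^ n * D ^ (2 * n + 1) * (n - 1)! * n ! ^ 3

section coeffScale

variable (C D : ℕ)

theorem coeffScale_mul_dvd (i j : ℕ) :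
    coeffScale C D i * coeffScale C D j ∣ D * coeffScale C D (i + j) := by
  have hfac : (i - 1)! * i ! ^ 3 * ((j - 1)! * j ! ^ 3) ∣ (i + j - 1)! * (i + j)! ^ 3 := by
    rw [show (i - 1)! * i ! ^ 3 * ((j - 1)! * j ! ^ 3)
        = (i - 1)! * (j - 1)! * (i ! * j !) ^ 3 by ring]
    exact mul_dvd_mul (factorial_pred_mul_factorial_pred_dvd i j)
      (pow_dvd_pow_of_dvd (factorial_mul_factorial_dvd_factorial_add i j) 3)
  obtain ⟨m, hm⟩ := hfac
  refine ⟨m, ?_⟩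
  simp only [coeffScale, pow_add, pow_succ, mul_add] at hm ⊢
  linear_combination (C ^ i * C ^ j * (D ^ 2) ^ i * (D ^ 2) ^ j * D * D) * hm

theorem coeffScale_dvd_of_le {i j : ℕ} (h : i ≤ j) : coeffScale C D i ∣ coeffScale C D j :=
  mul_dvd_mul (mul_dvd_mul (mul_dvd_mul (pow_dvd_pow C h) (pow_dvd_pow D (by omega)))
    (factorial_dvd_factorial (by omega))) (pow_dvd_pow_of_dvd (factorial_dvd_factorial h) 3)

theorem dvd_coeffScale (n : ℕ) : D ∣ coeffScale C D n :=
  dvd_mul_of_dvd_left (dvd_mul_of_dvd_left (dvd_mul_of_dvd_right (dvd_pow_self D (by omega)) _) _) _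

theorem coeffScale_succ {n : ℕ} (hn : 1 ≤ n) :
    coeffScale C D (n + 1) = n * (n + 1) ^ 3 * (C * D ^ 2 * coeffScale C D n) := by
  obtain ⟨m, rfl⟩ := Nat.exists_eq_add_of_le' hn
  simp only [coeffScale, Nat.add_sub_cancel, factorial_succ]
  ring

end coeffScale

section CommRing

variable {R : Type*} [CommRing R] (S : Subring R) {C D : ℕ} {u : ℕ → R} {n : ℕ}

theorem mul_sum_triple_mem (hu : ∀ j < n, (coeffScale C D j : R) * u j ∈ S) :
    ((D ^ 2 * coeffScale C D n : ℕ) : R) *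
      (∑ j ∈ range n ×ˢ range n ×ˢ range n,
        if j.1 + j.2.1 + j.2.2 = n - 1 then u j.1 * u j.2.1 * u j.2.2 else 0) ∈ S := by
  rw [mul_sum]
  refine S.sum_mem fun ⟨i, j, k⟩ hijk => ?_
  simp only [mem_product, mem_range] at hijk
  dsimp only
  split_ifs with h
  · refine S.natCast_mul_mem_of_dvd (a := coeffScale C D i * coeffScale C D j * coeffScale C D k)
      ?_ ?_
    · calc coeffScale C D i * coeffScale C D j * coeffScale C D k
          ∣ D * coeffScale C D (i + j) * coeffScale C D k :=
            mul_dvd_mul_right (coeffScale_mul_dvd C D i j) _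
        _ ∣ D * (D * coeffScale C D (i + j + k)) := by
            rw [mul_assoc]; exact mul_dvd_mul_left _ (coeffScale_mul_dvd C D _ k)
        _ ∣ D ^ 2 * coeffScale C D n := by
            rw [← mul_assoc, ← sq]; exact mul_dvd_mul_left _ (coeffScale_dvd_of_le C D (by omega))
    · convert S.mul_mem (S.mul_mem (hu i hijk.1) (hu j hijk.2.1)) (hu k hijk.2.2) using 1
      push_cast; ring
  · rw [mul_zero]; exact S.zero_mem

theorem mul_sum_pair_mem (hu : ∀ j < n, (coeffScale C D j : R) * u j ∈ S) :
    ((D ^ 2 * coeffScale C D n : ℕ) : R) *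
      (∑ j ∈ range n ×ˢ range n, if j.1 + j.2 = n - 1 then u j.1 * u j.2 else 0) ∈ S := by
  rw [mul_sum]
  refine S.sum_mem fun ⟨i, j⟩ hij => ?_
  simp only [mem_product, mem_range] at hij
  dsimp only
  split_ifs with h
  · refine S.natCast_mul_mem_of_dvd (a := coeffScale C D i * coeffScale C D j) ?_ ?_
    · exact (coeffScale_mul_dvd C D i j).trans
        (mul_dvd_mul (dvd_pow_self D two_ne_zero) (coeffScale_dvd_of_le C D (by omega)))
    · convert S.mul_mem (hu i hij.1) (hu j hij.2) using 1
      push_cast; ring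
  · rw [mul_zero]; exact S.zero_mem

end CommRing

section Field

variable {K : Type*} [Field K] [CharZero K] (S : Subring K) {β γ δ : K} {C D : ℕ} {u : ℕ → K}

theorem coeffScale_succ_mul_mem (hCδ : (C : K) * (2 * δ) ∈ S) (hCγ : (C : K) * (6 * γ) ∈ S)
    (hCβ : (C : K) * (2 * β) ∈ S) {n : ℕ} (hn : 2 ≤ n)
    (hrec : u (n + 1) = (1 / ((n : K) * (n + 1))) *
      (2 * δ * (∑ j ∈ range n ×ˢ range n ×ˢ range n,
          if j.1 + j.2.1 + j.2.2 = n - 1 then u j.1 * u j.2.1 * u j.2.2 else 0)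
        + 6 * γ * (∑ j ∈ range n ×ˢ range n, if j.1 + j.2 = n - 1 then u j.1 * u j.2 else 0)
        - 2 * β * u (n - 1) - 2 * δ * u (n - 2)))
    (hu : ∀ j < n, (coeffScale C D j : K) * u j ∈ S) :
    (coeffScale C D (n + 1) : K) * u (n + 1) ∈ S := by
  have single_mem : ∀ j < n, ((D ^ 2 * coeffScale C D n : ℕ) : K) * u j ∈ S := fun j hj =>
    S.natCast_mul_mem_of_dvd
      ((coeffScale_dvd_of_le C D hj.le).trans (dvd_mul_left _ _)) (hu j hj)
  set M : K := ((D ^ 2 * coeffScale C D n : ℕ) : K)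
  have hn0 : (n : K) ≠ 0 := by exact_mod_cast (show n ≠ 0 by omega)
  have hn1 : (n : K) + 1 ≠ 0 := by exact_mod_cast n.succ_ne_zero
  have key : (coeffScale C D (n + 1) : K) * u (n + 1) = ((n + 1) ^ 2 : ℕ) *
      ((C * (2 * δ)) * (M * ∑ j ∈ range n ×ˢ range n ×ˢ range n,
          if j.1 + j.2.1 + j.2.2 = n - 1 then u j.1 * u j.2.1 * u j.2.2 else 0)
        + (C * (6 * γ)) * (M * ∑ j ∈ range n ×ˢ range n,
          if j.1 + j.2 = n - 1 then u j.1 * u j.2 else 0)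
        - (C * (2 * β)) * (M * u (n - 1)) - (C * (2 * δ)) * (M * u (n - 2))) := by
    rw [hrec, coeffScale_succ C D (by omega)]
    simp only [M]
    push_cast
    field_simp
  rw [key]
  exact S.mul_mem (natCast_mem S _) <| S.sub_mem (S.sub_mem
    (S.add_mem (S.mul_mem hCδ (mul_sum_triple_mem S hu)) (S.mul_mem hCγ (mul_sum_pair_mem S hu)))
    (S.mul_mem hCβ (single_mem _ (by omega)))) (S.mul_mem hCδ (single_mem _ (by omega)))

theorem coeffScale_mul_mem (hCδ : (C : K) * (2 * δ) ∈ S) (hCγ : (C : K) * (6 * γ) ∈ S)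
    (hCβ : (C : K) * (2 * β) ∈ S)
    (hrec : ∀ n : ℕ, 2 ≤ n →
      u (n + 1) = (1 / ((n : K) * (n + 1))) *
        (2 * δ * (∑ j ∈ range n ×ˢ range n ×ˢ range n,
            if j.1 + j.2.1 + j.2.2 = n - 1 then u j.1 * u j.2.1 * u j.2.2 else 0)
          + 6 * γ * (∑ j ∈ range n ×ˢ range n, if j.1 + j.2 = n - 1 then u j.1 * u j.2 else 0)
          - 2 * β * u (n - 1) - 2 * δ * u (n - 2)))
    (hD0 : (D : K) * u 0 ∈ S) (hD1 : (D : K) * u 1 ∈ S) (hD2 : (D : K) * u 2 ∈ S) (n : ℕ) :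
    (coeffScale C D n : K) * u n ∈ S := by
  induction n using Nat.strong_induction_on with
  | _ n ih =>
    match n, ih with
    | 0, _ => exact S.natCast_mul_mem_of_dvd (dvd_coeffScale C D 0) hD0
    | 1, _ => exact S.natCast_mul_mem_of_dvd (dvd_coeffScale C D 1) hD1
    | 2, _ => exact S.natCast_mul_mem_of_dvd (dvd_coeffScale C D 2) hD2
    | m + 3, ih =>
      exact coeffScale_succ_mul_mem S hCδ hCγ hCβ (by omega) (hrec (m + 2) (by omega))
        fun j hj => ih j (by omega)

end Field

theorem painleve_coeff_denominator_general (β γ δ : ℚ) (u : ℕ → ℚ)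
    (hrec : ∀ n : ℕ, 2 ≤ n →
      u (n + 1) = (1 / ((n : ℚ) * (n + 1))) *
        (2 * δ * (∑ j ∈ Finset.range n ×ˢ Finset.range n ×ˢ Finset.range n,
            if j.1 + j.2.1 + j.2.2 = n - 1 then u j.1 * u j.2.1 * u j.2.2 else 0)
          + 6 * γ * (∑ j ∈ Finset.range n ×ˢ Finset.range n,
            if j.1 + j.2 = n - 1 then u j.1 * u j.2 else 0)
          - 2 * β * u (n - 1) - 2 * δ * u (n - 2)))
    (C D : ℕ)
    (hCδ : ∃ z : ℤ, (C : ℚ) * (2 * δ) = z) (hCγ : ∃ z : ℤ, (C : ℚ) * (6 * γ) = z)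
    (hCβ : ∃ z : ℤ, (C : ℚ) * (2 * β) = z)
    (hD0 : ∃ z : ℤ, (D : ℚ) * u 0 = z) (hD1 : ∃ z : ℤ, (D : ℚ) * u 1 = z)
    (hD2 : ∃ z : ℤ, (D : ℚ) * u 2 = z) :
    ∀ n : ℕ, 2 ≤ n → ∃ z : ℤ,
      (C : ℚ) ^ n * (D : ℚ) ^ (2 * n + 1) * (Nat.factorial (n - 1) : ℚ) *
        (Nat.factorial n : ℚ) ^ 3 * u n = z := by
  have mem_bot {q : ℚ} : (∃ z : ℤ, q = z) → q ∈ (⊥ : Subring ℚ) :=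
    fun ⟨z, hz⟩ => Subring.mem_bot.2 ⟨z, hz.symm⟩
  intro n _
  obtain ⟨z, hz⟩ := Subring.mem_bot.1 <| coeffScale_mul_mem ⊥ (mem_bot hCδ) (mem_bot hCγ)
    (mem_bot hCβ) hrec (mem_bot hD0) (mem_bot hD1) (mem_bot hD2) n
  exact ⟨z, by rw [hz]; simp [coeffScale]⟩

theorem painleve_coeff_denominator (α β γ δ : ℚ) (u : ℕ → ℚ)
    (h2 : u 2 = -δ * (u 0) ^ 3 - 3 * γ * (u 0) ^ 2 - β * u 0 / 2 - α / 2)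
    (hrec : ∀ n : ℕ, 2 ≤ n →
      u (n + 1) = (1 / ((n : ℚ) * (n + 1))) *
        (2 * δ * (∑ j ∈ Finset.range n ×ˢ Finset.range n ×ˢ Finset.range n,
            if j.1 + j.2.1 + j.2.2 = n - 1 then u j.1 * u j.2.1 * u j.2.2 else 0)
          + 6 * γ * (∑ j ∈ Finset.range n ×ˢ Finset.range n,
            if j.1 + j.2 = n - 1 then u j.1 * u j.2 else 0)
          - 2 * β * u (n - 1) - 2 * δ * u (n - 2)))
    (C D : ℕ) (hC : 0 < C) (hD : 0 < D)
    (hCδ : ∃ z : ℤ, (C : ℚ) * (2 * δ) = z) (hCγ : ∃ z : ℤ, (C : ℚ) * (6 * γ) = z)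
    (hCβ : ∃ z : ℤ, (C : ℚ) * (2 * β) = z)
    (hD0 : ∃ z : ℤ, (D : ℚ) * u 0 = z) (hD1 : ∃ z : ℤ, (D : ℚ) * u 1 = z)
    (hD2 : ∃ z : ℤ, (D : ℚ) * u 2 = z) :
    ∀ n : ℕ, 2 ≤ n → ∃ z : ℤ,
      (C : ℚ) ^ n * (D : ℚ) ^ (2 * n + 1) * (Nat.factorial (n - 1) : ℚ) *
        (Nat.factorial n : ℚ) ^ 3 * u n = z :=
  painleve_coeff_denominator_general β γ δ u hrec C D hCδ hCγ hCβ hD0 hD1 hD2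
end

section
/- Let s ≥ 1, let a₁,…,a_s be positive integers and b₁,…,b_s integers with a_i n + b_i > 0 for all n ≥ N. Let p be a prime with p ≥ 2(b_i - a_i) for all i. Let k ≥ 2, σ ≥ 0, and non-negative integers j₁,…,j_k with j₁+⋯+j_k = n - σ and a_i j_t + b_i - a_i ≥ 0 for all t and i. Then v_p( Π_{i=1}^{s} (a_i n + a_i)! (a_i n + b_i - 1)! / Π_{t=1}^{k} [(a_i j_t)! (a_i j_t + b_i - a_i)!] ) ≥ 2 Σ_{i=1}^{s} v_p( (a_i - 1)! (a_i σ)! ). -/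
/-!
By Legendre's formula `v_p(m!) = ∑_{r ≥ 1} ⌊m / p^r⌋` it suffices to compare floors at each
`q = p^r` separately. For a fixed `i` put `x_t = a j_t`, `c = b - a` and `A = (a - 1) + aσ`; the
denominator is then `∏_t x_t! (x_t + c)!` and the numerator `(X + A + 1)! (X + A + c)!` with
`X = ∑_t x_t`, while `(a - 1)! (aσ)!` divides `A!`. Since `2c ≤ p ≤ q`, the function
`y ↦ ⌊y/q⌋ + ⌊(y + c)/q⌋` is superadditive, and together with `⌊y/q⌋ + ⌊A/q⌋ ≤ ⌊(y + A)/q⌋`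
this gives the inequality at level `q`.
-/

open Finset Nat

theorem ediv_add_shift_ediv_superadditive {q c : ℤ} (hq : 0 < q) (hc : 2 * c ≤ q) (y z : ℤ) :
    y / q + (y + c) / q + (z / q + (z + c) / q) ≤ (y + z) / q + (y + z + c) / q := by
  have h₁ := Int.ediv_add_ediv_le_add_ediv (x := y) (y := z + c) hq
  have h₂ := Int.ediv_add_ediv_le_add_ediv (x := y + c) (y := z) hq
  have h₃ := Int.ediv_add_ediv_le_add_ediv (x := y) (y := z) hq
  have h₄ : (y + c) / q + (z + c) / q ≤ (y + z) / q + 1 :=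
    calc (y + c) / q + (z + c) / q ≤ (y + c + (z + c)) / q :=
          Int.ediv_add_ediv_le_add_ediv hq
      _ ≤ (y + z + 1 * q) / q := Int.ediv_le_ediv hq (by linarith)
      _ = (y + z) / q + 1 := Int.add_mul_ediv_right _ _ hq.ne'
  rw [← add_assoc] at h₁
  rw [add_right_comm] at h₂
  -- So the left side is at most `2 * ((y + z + c) / q)` and at most `2 * ((y + z) / q) + 1`.
  rcases le_total 0 c with hc₀ | hc₀
  · have := Int.ediv_le_ediv hq (show y + z ≤ y + z + c by linarith)
    omega
  · have := Int.ediv_le_ediv hq (show y + z + c ≤ y + z by linarith)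
    omega

theorem sum_ediv_add_shift_ediv_le {ι : Type*} {q c : ℤ} (hq : 0 < q) (hc : 2 * c ≤ q)
    {s : Finset ι} (hs : s.Nonempty) (x : ι → ℤ) (A : ℤ) :
    ∑ t ∈ s, (x t / q + (x t + c) / q) + 2 * (A / q) ≤
      (∑ t ∈ s, x t + A) / q + (∑ t ∈ s, x t + A + c) / q := by
  induction hs using Finset.Nonempty.cons_induction with
  | singleton t =>
    have h₁ := Int.ediv_add_ediv_le_add_ediv (x := x t) (y := A) hq
    have h₂ := Int.ediv_add_ediv_le_add_ediv (x := x t + c) (y := A) hq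
    rw [add_right_comm] at h₂
    simp only [sum_singleton]
    linarith
  | cons t s ht hs ih =>
    have := ediv_add_shift_ediv_superadditive hq hc (x t) (∑ u ∈ s, x u + A)
    simp only [sum_cons, add_assoc] at this ih ⊢
    linarith

theorem padicValNat_factorial_eq_sum_ediv {p : ℕ} [Fact p.Prime] {m B : ℕ} (hmB : m < B) :
    (padicValNat p m ! : ℤ) = ∑ r ∈ Ico 1 B, (m : ℤ) / (p : ℤ) ^ r := by
  rw [padicValNat_factorial (lt_of_le_of_lt (Nat.log_le_self _ _) hmB)]
  push_cast
  rfl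

theorem padicValNat_factorial_toNat_eq_sum_ediv {p : ℕ} [Fact p.Prime] {m : ℤ} {B : ℕ}
    (hm : 0 ≤ m) (hmB : m.toNat < B) :
    (padicValNat p m.toNat ! : ℤ) = ∑ r ∈ Ico 1 B, m / (p : ℤ) ^ r := by
  rw [padicValNat_factorial_eq_sum_ediv hmB, Int.toNat_of_nonneg hm]

theorem sum_padicValNat_factorial_add_shift_le {ι : Type*} {p : ℕ} [Fact p.Prime] {c : ℤ}
    (hc : 2 * c ≤ p) {s : Finset ι} (hs : s.Nonempty) (x : ι → ℕ)
    (hx : ∀ t ∈ s, 0 ≤ (x t : ℤ) + c) (A : ℕ) :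
    ∑ t ∈ s, ((padicValNat p (x t)! : ℤ) + padicValNat p ((x t : ℤ) + c).toNat !) +
        2 * (padicValNat p A ! : ℤ) ≤
      padicValNat p (∑ t ∈ s, x t + A)! +
        padicValNat p (((∑ t ∈ s, x t + A : ℕ) : ℤ) + c).toNat ! := by
  set X := ∑ t ∈ s, x t
  have hxX : ∀ t ∈ s, x t ≤ X := fun t ht => single_le_sum (fun _ _ => Nat.zero_le _) ht
  obtain ⟨t₀, ht₀⟩ := hs
  have hM : 0 ≤ ((X + A : ℕ) : ℤ) + c := by
    have := hx t₀ ht₀; have := hxX t₀ ht₀; push_cast; omega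
  obtain ⟨B, hB⟩ : ∃ B, B = X + A + c.toNat + 1 := ⟨_, rfl⟩
  have hxB : ∀ t ∈ s, x t < B ∧ ((x t : ℤ) + c).toNat < B := fun t ht => by
    have := hxX t ht; omega
  rw [padicValNat_factorial_eq_sum_ediv (m := X + A) (B := B) (by omega),
    padicValNat_factorial_eq_sum_ediv (m := A) (B := B) (by omega),
    padicValNat_factorial_toNat_eq_sum_ediv (B := B) hM (by omega),
    sum_congr rfl fun t ht => by
      rw [padicValNat_factorial_eq_sum_ediv (hxB t ht).1,
        padicValNat_factorial_toNat_eq_sum_ediv (hx t ht) (hxB t ht).2, ← sum_add_distrib],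
    sum_comm, mul_sum, ← sum_add_distrib, ← sum_add_distrib]
  refine sum_le_sum fun r hr => ?_
  have hr₁ : 1 ≤ r := (mem_Ico.mp hr).1
  have hq : 0 < (p : ℤ) ^ r := pow_pos (by exact_mod_cast (Fact.out : p.Prime).pos) r
  have hcq : 2 * c ≤ (p : ℤ) ^ r :=
    hc.trans (by exact_mod_cast Nat.le_self_pow (by omega) p)
  have := sum_ediv_add_shift_ediv_le hq hcq ⟨t₀, ht₀⟩ (fun t => (x t : ℤ)) A
  push_cast [X]
  exact this

theorem padicValNat_le_of_dvd {p a b : ℕ} [Fact p.Prime] (hb : b ≠ 0) (h : a ∣ b) :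
    padicValNat p a ≤ padicValNat p b :=
  (padicValNat_dvd_iff_le hb).mp (pow_padicValNat_dvd.trans h)

theorem padicValRat_prod {ι : Type*} {p : ℕ} [Fact p.Prime] {s : Finset ι} {f : ι → ℚ}
    (hf : ∀ i ∈ s, f i ≠ 0) : padicValRat p (∏ i ∈ s, f i) = ∑ i ∈ s, padicValRat p (f i) := by
  classical
  induction s using Finset.induction_on with
  | empty => simp
  | insert i s hi ih =>
    rw [prod_insert hi, sum_insert hi, padicValRat.mul (hf i (mem_insert_self i s))
      (prod_ne_zero_iff.mpr fun j hj => hf j (mem_insert_of_mem hj)),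
      ih fun j hj => hf j (mem_insert_of_mem hj)]

theorem two_mul_padicValNat_factorial_mul_le_padicValRat {ι : Type*} {p : ℕ} [Fact p.Prime]
    {c : ℤ} (hc : 2 * c ≤ p) {s : Finset ι} (hs : s.Nonempty) (x : ι → ℕ)
    (hx : ∀ t ∈ s, 0 ≤ (x t : ℤ) + c) (A₁ A₂ : ℕ) :
    2 * (padicValNat p (A₁ ! * A₂ !) : ℤ) ≤
      padicValRat p (((∑ t ∈ s, x t + A₁ + A₂ + 1)! *
          ((((∑ t ∈ s, x t + A₁ + A₂ : ℕ) : ℤ) + c).toNat ! : ℚ)) /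
        ∏ t ∈ s, (((x t)! : ℚ) * (((x t : ℤ) + c).toNat ! : ℚ))) := by
  rw [padicValRat.div (by positivity) (by positivity),
    padicValRat.mul (by positivity) (by positivity),
    padicValRat_prod fun t _ => by positivity]
  simp only [padicValRat.mul (Nat.cast_ne_zero.mpr (factorial_ne_zero _))
    (Nat.cast_ne_zero.mpr (factorial_ne_zero _)), padicValRat.of_nat]
  have hA : padicValNat p (A₁ ! * A₂ !) ≤ padicValNat p (A₁ + A₂)! :=
    padicValNat_le_of_dvd (factorial_ne_zero _) (factorial_mul_factorial_dvd_factorial_add _ _)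
  have hsucc : padicValNat p (∑ t ∈ s, x t + A₁ + A₂)! ≤
      padicValNat p (∑ t ∈ s, x t + A₁ + A₂ + 1)! :=
    padicValNat_le_of_dvd (factorial_ne_zero _) (factorial_dvd_factorial (le_succ _))
  have key := sum_padicValNat_factorial_add_shift_le hc hs x hx (A₁ + A₂)
  rw [← add_assoc] at key
  omega

theorem factorial_ratio_padic_valuation_general
    (s : ℕ) (a : Fin s → ℕ) (ha : ∀ i, 0 < a i) (b : Fin s → ℤ)
    (n : ℕ)
    (p : ℕ) (hp : p.Prime) (hpb : ∀ i, 2 * (b i - a i) ≤ (p : ℤ))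
    (k : ℕ) (hk : 2 ≤ k) (σ : ℕ) (hσ : σ ≤ n)
    (j : Fin k → ℕ) (hj : ∑ t, j t = n - σ)
    (hjb : ∀ i t, 0 ≤ (a i : ℤ) * j t + b i - a i) :
    2 * ∑ i, (padicValNat p (Nat.factorial (a i - 1) * Nat.factorial (a i * σ)) : ℤ) ≤
      padicValRat p (∏ i,
        ((Nat.factorial (a i * n + a i) : ℚ) *
            (Nat.factorial ((a i : ℤ) * n + b i - 1).toNat : ℚ)) /
          ∏ t, ((Nat.factorial (a i * j t) : ℚ) *
            (Nat.factorial (((a i : ℤ) * j t + b i - a i).toNat) : ℚ))) := by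
  have : Fact p.Prime := ⟨hp⟩
  have hk₀ : (univ : Finset (Fin k)).Nonempty := univ_nonempty_iff.mpr ⟨⟨0, by omega⟩⟩
  rw [padicValRat_prod fun i _ => by positivity, mul_sum]
  refine sum_le_sum fun i _ => ?_
  have hsum : ∑ t, a i * j t + (a i - 1) + a i * σ + 1 = a i * n + a i := by
    have hsplit : a i * (n - σ) + a i * σ = a i * n := by rw [← mul_add, Nat.sub_add_cancel hσ]
    have := ha i
    rw [← mul_sum, hj]
    omega
  have hsum' : ((∑ t, a i * j t + (a i - 1) + a i * σ : ℕ) : ℤ) + (b i - a i) =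
      a i * n + b i - 1 := by
    have := congrArg (Nat.cast : ℕ → ℤ) hsum
    push_cast at this ⊢
    linarith
  have hterm : ∀ t, ((a i * j t : ℕ) : ℤ) + (b i - a i) = a i * j t + b i - a i := fun t => by
    push_cast
    ring
  have key := two_mul_padicValNat_factorial_mul_le_padicValRat (hpb i) hk₀ (fun t => a i * j t)
    (fun t _ => (hterm t).symm ▸ hjb i t) (a i - 1) (a i * σ)
  rw [hsum, hsum'] at key
  simpa only [hterm] using key

theorem factorial_ratio_padic_valuation
    (s : ℕ) (hs : 1 ≤ s) (a : Fin s → ℕ) (ha : ∀ i, 0 < a i) (b : Fin s → ℤ)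
    (N n : ℕ) (hn : N ≤ n)
    (hpos : ∀ i, ∀ m : ℕ, N ≤ m → 0 < (a i : ℤ) * m + b i)
    (p : ℕ) (hp : p.Prime) (hpb : ∀ i, 2 * (b i - a i) ≤ (p : ℤ))
    (k : ℕ) (hk : 2 ≤ k) (σ : ℕ) (hσ : σ ≤ n)
    (j : Fin k → ℕ) (hj : ∑ t, j t = n - σ)
    (hjb : ∀ i t, 0 ≤ (a i : ℤ) * j t + b i - a i) :
    2 * ∑ i, (padicValNat p (Nat.factorial (a i - 1) * Nat.factorial (a i * σ)) : ℤ) ≤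
      padicValRat p (∏ i,
        ((Nat.factorial (a i * n + a i) : ℚ) *
            (Nat.factorial ((a i : ℤ) * n + b i - 1).toNat : ℚ)) /
          ∏ t, ((Nat.factorial (a i * j t) : ℚ) *
            (Nat.factorial (((a i : ℤ) * j t + b i - a i).toNat) : ℚ))) :=
  factorial_ratio_padic_valuation_general s a ha b n p hp hpb k hk σ hσ j hj hjb
end

section
/- Let p be a prime, ℓ ≥ 1, and let N, A, B, S, J₁,…,J_{k-1} be elements of [0,1) that are fractional parts of rationals with denominator p^ℓ, with B ≤ 1/2. Suppose J_t + B ≥ 1 for 1 ≤ t ≤ m and J_t + B < 1 for m+1 ≤ t ≤ k-1, where m ≥ 1, and suppose N + B < 1. Then ⌊N + B - J₁ - ⋯ - J_{k-1} - S⌋ ≤ -⌈(m-1)/2⌉ and, if additionally N < J₁, then ⌊N - J₁ - ⋯ - J_{k-1} - S⌋ ≤ -⌈m/2⌉. -/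
/-! Each of `J₁, …, J_m` is at least `1/2` because `B ≤ 1/2`, so `J₁ + ⋯ + J_{k-1} ≥ m/2`
(the remaining `J_t` and `S` are nonnegative), or `≥ J₁ + (m-1)/2` when `J₁` is kept apart.
Hence `N + B - ∑ J - S < 1 - m/2` and `N - ∑ J - S < -(m-1)/2`, and comparing these bounds
with `⌈(m-1)/2⌉ ≤ m/2` and `⌈m/2⌉ ≤ (m+1)/2` bounds the floors. -/

open Finset

section

variable {α : Type*} [Field α] [LinearOrder α] [IsStrictOrderedRing α]

theorem half_card_le_sum_Icc {f : ℕ → α} {a m n : ℕ} (ham : a ≤ m + 1) (hmn : m ≤ n)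
    (hhalf : ∀ t ∈ Icc a m, 1 / 2 ≤ f t) (hnonneg : ∀ t ∈ Icc (m + 1) n, 0 ≤ f t) :
    ((m : α) + 1 - a) / 2 ≤ ∑ t ∈ Icc a n, f t := by
  have hcard : ((m : α) + 1 - a) / 2 = #(Icc a m) • (1 / 2 : α) := by
    rw [Nat.card_Icc, nsmul_eq_mul, Nat.cast_sub ham]
    push_cast
    ring
  rw [hcard]
  refine (card_nsmul_le_sum _ _ _ hhalf).trans (sum_le_sum_of_subset_of_nonneg ?_ ?_)
  · exact Icc_subset_Icc le_rfl hmn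
  · intro t ht htm
    simp only [mem_Icc, not_and, not_le] at ht htm
    exact hnonneg t (mem_Icc.2 ⟨htm ht.1, ht.2⟩)

variable [FloorRing α]

theorem Int.floor_le_neg_ceil {x y : α} (h : x + ⌈y⌉ < 1) : ⌊x⌋ ≤ -⌈y⌉ := by
  rw [Int.floor_le_iff]
  push_cast
  linarith

theorem Int.ceil_intCast_div_two_le (n : ℤ) : (⌈(n : α) / 2⌉ : α) ≤ (n + 1) / 2 := by
  have hlt : 2 * ⌈(n : α) / 2⌉ < n + 2 := by
    have := Int.ceil_lt_add_one ((n : α) / 2)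
    exact_mod_cast (by linarith : (2 * ⌈(n : α) / 2⌉ : α) < n + 2)
  have hle : (2 * ⌈(n : α) / 2⌉ : α) ≤ n + 1 := by
    exact_mod_cast (by omega : 2 * ⌈(n : α) / 2⌉ ≤ n + 1)
  linarith

end

theorem floor_fractional_estimate_general (p : ℕ) (ℓ : ℕ)
    (k m : ℕ) (hm : 1 ≤ m) (hmk : m ≤ k - 1)
    (N B S : ℚ) (J : ℕ → ℚ)
    (hS : ∃ c : ℕ, S = c / p ^ ℓ ∧ S < 1)
    (hJ : ∀ t, 1 ≤ t → t ≤ k - 1 → ∃ c : ℕ, J t = c / p ^ ℓ ∧ J t < 1)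
    (hB2 : B ≤ 1 / 2)
    (hJm : ∀ t, 1 ≤ t → t ≤ m → 1 ≤ J t + B)
    (hNB : N + B < 1) :
    ⌊N + B - (∑ t ∈ Finset.Icc 1 (k - 1), J t) - S⌋ ≤ -⌈((m : ℚ) - 1) / 2⌉ ∧
    (N < J 1 →
      ⌊N - (∑ t ∈ Finset.Icc 1 (k - 1), J t) - S⌋ ≤ -⌈(m : ℚ) / 2⌉) := by
  have hS0 : 0 ≤ S := by
    obtain ⟨_, rfl, -⟩ := hS
    positivity
  have hJhalf : ∀ t ∈ Icc 1 m, 1 / 2 ≤ J t := fun t ht ↦ by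
    linarith [hJm t (mem_Icc.1 ht).1 (mem_Icc.1 ht).2]
  have hJnonneg : ∀ t ∈ Icc (m + 1) (k - 1), 0 ≤ J t := fun t ht ↦ by
    obtain ⟨_, hc, -⟩ := hJ t (by grind) (mem_Icc.1 ht).2
    rw [hc]
    positivity
  constructor
  · have hsum := half_card_le_sum_Icc (by omega) hmk hJhalf hJnonneg
    have hceil := Int.ceil_intCast_div_two_le (α := ℚ) (m - 1)
    push_cast at hsum hceil
    exact Int.floor_le_neg_ceil (by linarith)
  · intro hNJ
    have hsum := half_card_le_sum_Icc (a := 2) (by omega) hmk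
      (fun t ht ↦ hJhalf t (by grind)) hJnonneg
    have hsplit : ∑ t ∈ Icc 1 (k - 1), J t = J 1 + ∑ t ∈ Icc 2 (k - 1), J t := by
      rw [← add_sum_Ioc_eq_sum_Icc (by omega), ← Icc_add_one_left_eq_Ioc]; rfl
    have hceil := Int.ceil_intCast_div_two_le (α := ℚ) m
    push_cast at hsum hceil
    exact Int.floor_le_neg_ceil (by linarith)

theorem floor_fractional_estimate (p : ℕ) (hp : p.Prime) (ℓ : ℕ) (hℓ : 1 ≤ ℓ)
    (k m : ℕ) (hm : 1 ≤ m) (hmk : m ≤ k - 1) (hk : 2 ≤ k)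
    (N A B S : ℚ) (J : ℕ → ℚ)
    (hN : ∃ c : ℕ, N = c / p ^ ℓ ∧ N < 1) (hA : ∃ c : ℕ, A = c / p ^ ℓ ∧ A < 1)
    (hB : ∃ c : ℕ, B = c / p ^ ℓ ∧ B < 1) (hS : ∃ c : ℕ, S = c / p ^ ℓ ∧ S < 1)
    (hJ : ∀ t, 1 ≤ t → t ≤ k - 1 → ∃ c : ℕ, J t = c / p ^ ℓ ∧ J t < 1)
    (hB2 : B ≤ 1 / 2)
    (hJm : ∀ t, 1 ≤ t → t ≤ m → 1 ≤ J t + B)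
    (hJm' : ∀ t, m + 1 ≤ t → t ≤ k - 1 → J t + B < 1)
    (hNB : N + B < 1) :
    ⌊N + B - (∑ t ∈ Finset.Icc 1 (k - 1), J t) - S⌋ ≤ -⌈((m : ℚ) - 1) / 2⌉ ∧
    (N < J 1 →
      ⌊N - (∑ t ∈ Finset.Icc 1 (k - 1), J t) - S⌋ ≤ -⌈(m : ℚ) / 2⌉) :=
  floor_fractional_estimate_general p ℓ k m hm hmk N B S J hS hJ hB2 hJm hNB
end

section
/- Define (ℓ_n) as the Taylor coefficients at 0 of the compositional inverse ℓ of the dilogarithm Li₂(x) = Σ_{n≥1} x^n/n². Then ℓ₀ = 0, ℓ₁ = 1, ℓ₂ = -1/4, ℓ₃ = 1/72, ℓ₄ = -1/576, and ℓ satisfies the differential equation ℓ''ℓ - ℓ''ℓ² + (ℓ')³ + (ℓ')²ℓ - (ℓ')² = 0 as an identity of formal power series. -/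
/-!
The hypothesis says `Li₂(ℓ) = X`. Put `L = -log (1 - X) = ∑ Xⁿ / n`; then `X · Li₂' = L` and
`(1 - X) · L' = 1`. By the chain rule the first identity gives `ℓ = L(ℓ) · ℓ'` and the second
`(1 - ℓ) · L'(ℓ) = 1`. Differentiating `ℓ = L(ℓ) · ℓ'` and eliminating `L(ℓ)` and `L'(ℓ)`
yields the differential equation. The coefficients `ℓ₁, …, ℓ₄` are solved for one after the
other from the coefficients of `X, …, X⁴` in `Li₂(ℓ) = X`, a triangular system since `ℓ₀ = 0`.
-/

open PowerSeries Finset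

namespace PowerSeries

set_option linter.deprecated false in
theorem derivativeFun_eq_derivative {R : Type*} [CommSemiring R] (f : R⟦X⟧) :
    f.derivativeFun = d⁄dX R f :=
  rfl

section CommRing

variable {R : Type*} [CommRing R]

theorem coeff_pow_eq_zero_of_lt {g : R⟦X⟧} (hg : constantCoeff g = 0) {n k : ℕ} (h : n < k) :
    coeff n (g ^ k) = 0 :=
  coeff_of_lt_order _ ((Nat.cast_lt.2 h).trans_le (le_order_pow_of_constantCoeff_eq_zero k hg))

theorem coeff_subst_eq_sum_range {f g : R⟦X⟧} (hg : constantCoeff g = 0) (n : ℕ) :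
    coeff n (f.subst g) = ∑ k ∈ range (n + 1), coeff k f * coeff n (g ^ k) := by
  rw [coeff_subst' (HasSubst.of_constantCoeff_zero' hg)]
  refine finsum_eq_sum_of_support_subset _ fun k hk => ?_
  by_contra hkn
  exact hk (show coeff k f • coeff n (g ^ k) = 0 by
    rw [coeff_pow_eq_zero_of_lt hg (by simpa using hkn), smul_zero])

end CommRing

variable (K : Type*) [Field K]

-- At `n = 0` both formulas give `1 / 0 = 0`, the correct constant coefficient.
noncomputable def dilog : K⟦X⟧ :=
  mk fun n => 1 / (n : K) ^ 2

noncomputable def negLogOneSub : K⟦X⟧ :=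
  mk fun n => 1 / (n : K)

variable {K} [CharZero K]

theorem X_mul_derivative_dilog : X * d⁄dX K (dilog K) = negLogOneSub K := by
  ext (_ | n)
  · simp [negLogOneSub]
  · rw [coeff_succ_X_mul, coeff_derivative, dilog, negLogOneSub, coeff_mk, coeff_mk]
    push_cast
    field_simp

theorem derivative_negLogOneSub : d⁄dX K (negLogOneSub K) = mk 1 := by
  ext n
  rw [coeff_derivative, negLogOneSub, coeff_mk, coeff_mk]
  push_cast
  field_simp
  simp

theorem coeff_subst_dilog {ℓ : K⟦X⟧} (hℓ : constantCoeff ℓ = 0) (n : ℕ) :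
    coeff n ((dilog K).subst ℓ) = ∑ k ∈ Icc 1 n, 1 / (k : K) ^ 2 * coeff n (ℓ ^ k) := by
  rw [coeff_subst_eq_sum_range hℓ, range_eq_Ico, sum_eq_sum_Ico_succ_bot (by omega),
    Ico_add_one_right_eq_Icc]
  simp [dilog]

theorem coeff_one_to_four_of_subst_dilog_eq_X {ℓ : K⟦X⟧} (hℓ : constantCoeff ℓ = 0)
    (hinv : (dilog K).subst ℓ = X) :
    coeff 1 ℓ = 1 ∧ coeff 2 ℓ = -1 / 4 ∧ coeff 3 ℓ = 1 / 72 ∧ coeff 4 ℓ = -1 / 576 := by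
  have h0 : coeff 0 ℓ = 0 := by rwa [coeff_zero_eq_constantCoeff_apply]
  have hcoeff (n : ℕ) :
      ∑ k ∈ Icc 1 n, 1 / (k : K) ^ 2 * coeff n (ℓ ^ k) = if n = 1 then 1 else 0 := by
    rw [← coeff_subst_dilog hℓ, hinv, coeff_X]
  have e1 : coeff 1 ℓ = 1 := by simpa using hcoeff 1
  have e2 : coeff 2 ℓ + coeff 1 ℓ ^ 2 / 4 = 0 := by
    have expand := hcoeff 2
    simp [sum_Icc_succ_top, pow_succ, coeff_mul, Nat.antidiagonal_succ, h0] at expand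
    linear_combination expand
  have e3 : coeff 3 ℓ + coeff 1 ℓ * coeff 2 ℓ / 2 + coeff 1 ℓ ^ 3 / 9 = 0 := by
    have expand := hcoeff 3
    simp [sum_Icc_succ_top, pow_succ, coeff_mul, Nat.antidiagonal_succ, h0] at expand
    linear_combination expand
  have e4 : coeff 4 ℓ + (2 * coeff 1 ℓ * coeff 3 ℓ + coeff 2 ℓ ^ 2) / 4
      + coeff 1 ℓ ^ 2 * coeff 2 ℓ / 3 + coeff 1 ℓ ^ 4 / 16 = 0 := by
    have expand := hcoeff 4
    simp [sum_Icc_succ_top, pow_succ, coeff_mul, Nat.antidiagonal_succ, h0] at expand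
    linear_combination expand
  rw [e1] at e2 e3 e4
  have h2 : coeff 2 ℓ = -1 / 4 := by linear_combination e2
  rw [h2] at e3 e4
  have h3 : coeff 3 ℓ = 1 / 72 := by linear_combination e3
  rw [h3] at e4
  exact ⟨e1, h2, h3, by linear_combination e4⟩

theorem eq_subst_negLogOneSub_mul_derivative {ℓ : K⟦X⟧} (hℓ : constantCoeff ℓ = 0)
    (hinv : (dilog K).subst ℓ = X) :
    ℓ = (negLogOneSub K).subst ℓ * d⁄dX K ℓ := by
  have hs := HasSubst.of_constantCoeff_zero' hℓ
  have hchain : (d⁄dX K (dilog K)).subst ℓ * d⁄dX K ℓ = 1 := by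
    rw [← derivative_subst hs, hinv, derivative_X]
  calc ℓ = ℓ * ((d⁄dX K (dilog K)).subst ℓ * d⁄dX K ℓ) := by rw [hchain, mul_one]
    _ = (X * d⁄dX K (dilog K)).subst ℓ * d⁄dX K ℓ := by rw [subst_mul hs, subst_X hs, mul_assoc]
    _ = (negLogOneSub K).subst ℓ * d⁄dX K ℓ := by rw [X_mul_derivative_dilog]

theorem one_sub_mul_subst_derivative_negLogOneSub {ℓ : K⟦X⟧} (hℓ : constantCoeff ℓ = 0) :
    (1 - ℓ) * (d⁄dX K (negLogOneSub K)).subst ℓ = 1 := by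
  have hs := HasSubst.of_constantCoeff_zero' hℓ
  have h := congrArg (substAlgHom hs) (mk_one_mul_one_sub_eq_one K)
  rw [map_mul, map_sub, map_one, coe_substAlgHom, subst_X hs] at h
  rw [derivative_negLogOneSub, mul_comm, h]

theorem ode_of_subst_dilog_eq_X {ℓ : K⟦X⟧} (hℓ : constantCoeff ℓ = 0)
    (hinv : (dilog K).subst ℓ = X) :
    d⁄dX K (d⁄dX K ℓ) * ℓ - d⁄dX K (d⁄dX K ℓ) * ℓ ^ 2 + d⁄dX K ℓ ^ 3 + d⁄dX K ℓ ^ 2 * ℓ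
      - d⁄dX K ℓ ^ 2 = 0 := by
  have hs := HasSubst.of_constantCoeff_zero' hℓ
  set L := (negLogOneSub K).subst ℓ
  have hL : ℓ = L * d⁄dX K ℓ := eq_subst_negLogOneSub_mul_derivative hℓ hinv
  have hL' : d⁄dX K ℓ = (d⁄dX K (negLogOneSub K)).subst ℓ * d⁄dX K ℓ * d⁄dX K ℓ
      + L * d⁄dX K (d⁄dX K ℓ) := by
    conv_lhs => rw [hL]
    rw [Derivation.leibniz, derivative_subst hs, smul_eq_mul, smul_eq_mul]
    ring
  linear_combination (1 - ℓ) * d⁄dX K (d⁄dX K ℓ) * hL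
    - d⁄dX K ℓ ^ 3 * one_sub_mul_subst_derivative_negLogOneSub hℓ
    - (1 - ℓ) * d⁄dX K ℓ * hL'

end PowerSeries

theorem dilog_inverse_coeffs_and_ode (ℓ : PowerSeries ℚ)
    (h0 : PowerSeries.coeff 0 ℓ = 0)
    (hcomp : ∀ n : ℕ,
      ∑ k ∈ Finset.Icc 1 n, (1 / (k : ℚ) ^ 2) * PowerSeries.coeff n (ℓ ^ k) =
        if n = 1 then 1 else 0) :
    PowerSeries.coeff 0 ℓ = 0 ∧ PowerSeries.coeff 1 ℓ = 1 ∧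
    PowerSeries.coeff 2 ℓ = -1 / 4 ∧ PowerSeries.coeff 3 ℓ = 1 / 72 ∧
    PowerSeries.coeff 4 ℓ = -1 / 576 ∧
    ℓ.derivativeFun.derivativeFun * ℓ - ℓ.derivativeFun.derivativeFun * ℓ ^ 2 +
      ℓ.derivativeFun ^ 3 + ℓ.derivativeFun ^ 2 * ℓ - ℓ.derivativeFun ^ 2 = 0 := by
  have hℓ : constantCoeff ℓ = 0 := by rwa [← coeff_zero_eq_constantCoeff_apply]
  have hinv : (dilog ℚ).subst ℓ = X := by
    ext n
    rw [coeff_subst_dilog hℓ, hcomp, coeff_X]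
  obtain ⟨h1, h2, h3, h4⟩ := coeff_one_to_four_of_subst_dilog_eq_X hℓ hinv
  simp only [derivativeFun_eq_derivative]
  exact ⟨h0, h1, h2, h3, h4, ode_of_subst_dilog_eq_X hℓ hinv⟩
end
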